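/- Let S = (s_ij) be a real symmetric n×n matrix with all diagonal entries nonnegative and at most one positive eigenvalue, and suppose s_ij ≠ 0 for all i ≠ j. Then there exists a sign vector σ : {1,…,n} → {−1,+1} such that s_ij·σ_i·σ_j > 0 for all i ≠ j; in other words, the sign of s_ij equals σ_i·σ_j for all i ≠ j. -/

import Mathlib

/-!
Since `S` has at most one positive eigenvalue, the form `x ↦ x ⬝ᵥ S *ᵥ x` is nonpositive on a
hyperplane (orthogonal to the positive eigenvector), hence positive definite on no plane.
For indices `i, j, k` put `x = S i j`, `y = S i k`, `z = S j k`; the vectors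
`-(α + β) z eᵢ + α y eⱼ + β x eₖ` form a plane on which the form takes the value
`S i i ((α + β) z)² + S j j (α y)² + S k k (β x)² - 2 x y z (α² + α β + β²)`.
With nonnegative diagonal this forces `x y z ≥ 0`, so for distinct indices `S i j S i k S j k`
is positive, and the signs of a single row `S i₀ ·` give the sign vector.
-/

open Matrix

lemma Module.Dual.exists_map_smul_add_smul_eq_zero {K V : Type*} [Field K] [AddCommGroup V]
    [Module K V] (ℓ : Module.Dual K V) (u v : V) :
    ∃ α β : K, (α ≠ 0 ∨ β ≠ 0) ∧ ℓ (α • u + β • v) = 0 := by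
  by_cases hu : ℓ u = 0
  · exact ⟨1, 0, Or.inl one_ne_zero, by simp [hu]⟩
  · exact ⟨ℓ v, -ℓ u, Or.inr (neg_ne_zero.mpr hu), by simp; ring⟩

lemma sq_add_mul_add_sq_pos {α β : ℝ} (h : α ≠ 0 ∨ β ≠ 0) : 0 < α ^ 2 + α * β + β ^ 2 := by
  rcases h with h | h
  · nlinarith [sq_pos_of_ne_zero h, sq_nonneg (2 * β + α)]
  · nlinarith [sq_pos_of_ne_zero h, sq_nonneg (2 * α + β)]

lemma exists_sign_vector_of_forall_pos_mul_mul {ι : Type*} (s : ι → ι → ℝ) (τ : ι → ℝ)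
    (hτ : ∀ i, τ i ≠ 0) (h : ∀ i j, i ≠ j → 0 < s i j * τ i * τ j) :
    ∃ σ : ι → ℝ, (∀ i, σ i = 1 ∨ σ i = -1) ∧ ∀ i j, i ≠ j → 0 < s i j * σ i * σ j := by
  refine ⟨fun i => τ i / |τ i|, fun i => ?_, fun i j hij => ?_⟩
  · rcases (hτ i).lt_or_gt with hneg | hpos
    · simp [abs_of_neg hneg, hneg.ne]
    · simp [abs_of_pos hpos, hpos.ne']
  · have : s i j * (τ i / |τ i|) * (τ j / |τ j|) = s i j * τ i * τ j / (|τ i| * |τ j|) := by ring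
    rw [this]
    exact div_pos (h i j hij) (mul_pos (abs_pos.mpr (hτ i)) (abs_pos.mpr (hτ j)))

namespace Matrix

lemma IsSymm.exists_sign_vector_of_mul_mul_nonneg {ι : Type*} {S : Matrix ι ι ℝ}
    (hS : S.IsSymm) (hnz : ∀ i j, i ≠ j → S i j ≠ 0)
    (htriple : ∀ i j k, 0 ≤ S i j * S i k * S j k) :
    ∃ σ : ι → ℝ, (∀ i, σ i = 1 ∨ σ i = -1) ∧ ∀ i j, i ≠ j → 0 < S i j * σ i * σ j := by
  rcases isEmpty_or_nonempty ι with hι | ⟨⟨i₀⟩⟩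
  · exact ⟨1, isEmptyElim, isEmptyElim⟩
  classical
  let τ := Function.update (S i₀) i₀ 1
  have hτ : ∀ i, τ i ≠ 0 := fun i => by
    rcases eq_or_ne i i₀ with rfl | hi
    · simp [τ]
    · simpa [τ, hi] using hnz i₀ i hi.symm
  refine exists_sign_vector_of_forall_pos_mul_mul S τ hτ fun i j hij => ?_
  rcases eq_or_ne i i₀ with rfl | hi
  · simpa [τ, hij.symm, ← sq] using sq_pos_of_ne_zero (hnz i j hij)
  rcases eq_or_ne j i₀ with rfl | hj
  · simpa [τ, hi, hS.apply, ← sq] using sq_pos_of_ne_zero (hnz i j hij)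
  have hne : S i j * τ i * τ j ≠ 0 := by
    simp [τ, hi, hj, hnz i j hij, hnz _ _ hi.symm, hnz _ _ hj.symm]
  refine lt_of_le_of_ne ?_ hne.symm
  simpa [τ, hi, hj, mul_comm, mul_left_comm] using htriple i₀ i j

variable {ι : Type*} [Fintype ι] [DecidableEq ι]

lemma IsHermitian.dotProduct_mulVec_self_eq_sum_eigenvalues {S : Matrix ι ι ℝ}
    (hS : S.IsHermitian) (x : ι → ℝ) :
    x ⬝ᵥ S *ᵥ x =
      ∑ m, hS.eigenvalues m * ((star (hS.eigenvectorUnitary : Matrix ι ι ℝ) *ᵥ x) m) ^ 2 := by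
  set U := (hS.eigenvectorUnitary : Matrix ι ι ℝ)
  have hU : star U = Uᵀ := by rw [star_eq_conjTranspose, conjTranspose_eq_transpose_of_trivial]
  conv_lhs => rw [hS.spectral_theorem, Unitary.conjStarAlgAut_apply]
  rw [← mulVec_mulVec, ← mulVec_mulVec, dotProduct_mulVec, hU]
  simp only [dotProduct, mulVec_diagonal, mulVec_transpose, Function.comp_apply,
    RCLike.ofReal_real_eq_id, id_eq]
  exact Finset.sum_congr rfl fun m _ => by ring

lemma IsHermitian.exists_dual_nonpos_on_ker {S : Matrix ι ι ℝ} (hS : S.IsHermitian)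
    (hpos : Nat.card {i // 0 < hS.eigenvalues i} ≤ 1) :
    ∃ ℓ : Module.Dual ℝ (ι → ℝ), ∀ x, ℓ x = 0 → x ⬝ᵥ S *ᵥ x ≤ 0 := by
  have := Finite.card_le_one_iff_subsingleton.mp hpos
  by_cases hex : ∃ m₀, 0 < hS.eigenvalues m₀
  · obtain ⟨m₀, hm₀⟩ := hex
    refine ⟨(LinearMap.proj m₀).comp (star (hS.eigenvectorUnitary : Matrix ι ι ℝ)).mulVecLin,
      fun x hx => ?_⟩
    rw [hS.dotProduct_mulVec_self_eq_sum_eigenvalues]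
    refine Finset.sum_nonpos fun m _ => ?_
    rcases eq_or_ne m m₀ with rfl | hm
    · simp_all
    · have : ¬ 0 < hS.eigenvalues m := fun h => hm <|
        congrArg Subtype.val (Subsingleton.elim (⟨m, h⟩ : {i // 0 < hS.eigenvalues i}) ⟨m₀, hm₀⟩)
      exact mul_nonpos_of_nonpos_of_nonneg (not_lt.mp this) (sq_nonneg _)
  · push Not at hex
    refine ⟨0, fun x _ => ?_⟩
    rw [hS.dotProduct_mulVec_self_eq_sum_eigenvalues]
    exact Finset.sum_nonpos fun m _ => mul_nonpos_of_nonpos_of_nonneg (hex m) (sq_nonneg _)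

lemma IsHermitian.exists_smul_add_smul_nonpos {S : Matrix ι ι ℝ} (hS : S.IsHermitian)
    (hpos : Nat.card {i // 0 < hS.eigenvalues i} ≤ 1) (u v : ι → ℝ) :
    ∃ α β : ℝ, (α ≠ 0 ∨ β ≠ 0) ∧ (α • u + β • v) ⬝ᵥ S *ᵥ (α • u + β • v) ≤ 0 := by
  obtain ⟨ℓ, hℓ⟩ := hS.exists_dual_nonpos_on_ker hpos
  obtain ⟨α, β, hαβ, hker⟩ := ℓ.exists_map_smul_add_smul_eq_zero u v
  exact ⟨α, β, hαβ, hℓ _ hker⟩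

lemma IsSymm.dotProduct_mulVec_single_add_single_add_single {S : Matrix ι ι ℝ} (hS : S.IsSymm)
    (i j k : ι) (p q r : ℝ) :
    (Pi.single i p + Pi.single j q + Pi.single k r : ι → ℝ) ⬝ᵥ
      S *ᵥ (Pi.single i p + Pi.single j q + Pi.single k r) =
      S i i * p ^ 2 + S j j * q ^ 2 + S k k * r ^ 2 +
        2 * (S i j * p * q + S i k * p * r + S j k * q * r) := by
  simp only [add_dotProduct, mulVec_add, dotProduct_add, single_dotProduct, mulVec_single,
    Pi.smul_apply, col_apply, MulOpposite.smul_eq_mul_unop, MulOpposite.unop_op,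
    hS.apply i j, hS.apply i k, hS.apply j k]
  ring

lemma IsSymm.mul_mul_nonneg_of_exists_smul_add_smul_nonpos {S : Matrix ι ι ℝ} (hS : S.IsSymm)
    (hdiag : ∀ i, 0 ≤ S i i)
    (hplane : ∀ u v : ι → ℝ, ∃ α β : ℝ, (α ≠ 0 ∨ β ≠ 0) ∧
      (α • u + β • v) ⬝ᵥ S *ᵥ (α • u + β • v) ≤ 0)
    (i j k : ι) : 0 ≤ S i j * S i k * S j k := by
  set x := S i j
  set y := S i k
  set z := S j k
  obtain ⟨α, β, hαβ, hQ⟩ := hplane (Pi.single i (-z) + Pi.single j y)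
    (Pi.single i (-z) + Pi.single k x)
  have hw : α • (Pi.single i (-z) + Pi.single j y) + β • (Pi.single i (-z) + Pi.single k x) =
      (Pi.single i (-(α + β) * z) + Pi.single j (α * y) + Pi.single k (β * x) : ι → ℝ) := by
    ext l
    simp only [Pi.add_apply, Pi.smul_apply, Pi.single_apply, smul_eq_mul]
    split_ifs <;> ring
  rw [hw, hS.dotProduct_mulVec_single_add_single_add_single] at hQ
  have hdiag_part :
      0 ≤ S i i * ((α + β) * z) ^ 2 + S j j * (α * y) ^ 2 + S k k * (β * x) ^ 2 := by
    have := hdiag i; have := hdiag j; have := hdiag k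
    positivity
  have hbound : S i i * ((α + β) * z) ^ 2 + S j j * (α * y) ^ 2 + S k k * (β * x) ^ 2 ≤
      2 * (x * y * z) * (α ^ 2 + α * β + β ^ 2) := by
    linear_combination hQ
  exact nonneg_of_mul_nonneg_left (by linarith) (sq_add_mul_add_sq_pos hαβ)

end Matrix

/-- If a real symmetric `n × n` matrix `S` has all diagonal entries nonnegative, at most
one positive eigenvalue, and no zero off-diagonal entries, then there is a sign vector
`σ : {1,…,n} → {−1,+1}` with `s_ij · σ_i · σ_j > 0` for all `i ≠ j`. -/
theorem exists_sign_vector (n : ℕ) (S : Matrix (Fin n) (Fin n) ℝ)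
    (hS : S.IsHermitian) (hdiag : ∀ i, 0 ≤ S i i)
    (hpos : Nat.card {i : Fin n // 0 < hS.eigenvalues i} ≤ 1)
    (hnz : ∀ i j : Fin n, i ≠ j → S i j ≠ 0) :
    ∃ σ : Fin n → ℝ, (∀ i, σ i = 1 ∨ σ i = -1) ∧
      ∀ i j : Fin n, i ≠ j → 0 < S i j * σ i * σ j := by
  have hsymm : S.IsSymm := isHermitian_iff_isSymm.mp hS
  have htriple : ∀ i j k, 0 ≤ S i j * S i k * S j k :=
    hsymm.mul_mul_nonneg_of_exists_smul_add_smul_nonpos hdiag (hS.exists_smul_add_smul_nonpos hpos)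
  exact hsymm.exists_sign_vector_of_mul_mul_nonneg hnz htriple
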